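/- Let X, Y be real Banach spaces, U ⊆ X open, f : U → Y continuous, and Jf a pseudo-Jacobian mapping for f on U satisfying the chain rule condition. If Jf is regular at a point x ∈ U, then for every 0 < α < α_{Jf}(x) there exists an open ball B(x, r) ⊆ U such that: (1) the set V := f(B(x, r)) is open in Y; (2) the restriction of f to B(x, r) is a homeomorphism onto V; and (3) the inverse of this restriction is (1/α)-Lipschitz on V. -/

import Mathlib

open Filter Topology Metric Set Bornology

noncomputable section

/-- Upper right-hand Dini directional derivative of `φ` at `x` in direction `v`. -/
def diniUpper {X : Type*} [NormedAddCommGroup X] [NormedSpace ℝ X]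
    (φ : X → ℝ) (x v : X) : ℝ :=
  Filter.limsup (fun t : ℝ => (φ (x + t • v) - φ x) / t) (𝓝[>] (0 : ℝ))

/-- `J` is a pseudo-Jacobian of `f` at `x`: `J` is a nonempty set of bounded linear
operators such that for every continuous linear functional `p` on `Y` and every
direction `v`, the upper Dini derivative of `p ∘ f` at `x` in direction `v` is bounded
by `sup {p (T v) : T ∈ J}`. -/
def IsPseudoJacobianAt {X Y : Type*} [NormedAddCommGroup X] [NormedSpace ℝ X]
    [NormedAddCommGroup Y] [NormedSpace ℝ Y]
    (f : X → Y) (J : Set (X →L[ℝ] Y)) (x : X) : Prop :=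
  J.Nonempty ∧ ∀ (p : Y →L[ℝ] ℝ) (v : X),
    diniUpper (fun z => p (f z)) x v ≤ sSup ((fun T : X →L[ℝ] Y => p (T v)) '' J)


/-- Clarke generalized directional derivative of `φ` at `y` in direction `w`:
`limsup_{z → y, t → 0⁺} (φ (z + t w) − φ z)/t`. -/
def clarkeDirDeriv {Y : Type*} [NormedAddCommGroup Y] [NormedSpace ℝ Y]
    (φ : Y → ℝ) (y w : Y) : ℝ :=
  Filter.limsup (fun q : Y × ℝ => (φ (q.1 + q.2 • w) - φ q.1) / q.2)
    ((𝓝 y) ×ˢ (𝓝[>] (0 : ℝ)))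

/-- Clarke subdifferential of `φ` at `y`. -/
def clarkeSubdiff {Y : Type*} [NormedAddCommGroup Y] [NormedSpace ℝ Y]
    (φ : Y → ℝ) (y : Y) : Set (Y →L[ℝ] ℝ) :=
  {p | ∀ w : Y, p w ≤ clarkeDirDeriv φ y w}

/-- The set `A_{x,y}(f) = ∂‖·‖(f x − y) ∘ co (Jf x) ⊆ X*`. -/
def pjComp {X Y : Type*} [NormedAddCommGroup X] [NormedSpace ℝ X]
    [NormedAddCommGroup Y] [NormedSpace ℝ Y]
    (f : X → Y) (Jf : X → Set (X →L[ℝ] Y)) (x : X) (y : Y) : Set (X →L[ℝ] ℝ) :=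
  {S | ∃ p ∈ clarkeSubdiff (fun w : Y => ‖w‖) (f x - y),
       ∃ T ∈ convexHull ℝ (Jf x), S = p.comp T}

/-- The pseudo-Jacobian mapping `Jf` satisfies the chain rule condition on `U`:
for every `x ∈ U` and every `y ≠ f x`, the set `A_{x,y}(f)` is weak-star closed,
convex, and is a pseudo-Jacobian at `x` of the function `z ↦ ‖f z − y‖`. -/
def ChainRuleCond {X Y : Type*} [NormedAddCommGroup X] [NormedSpace ℝ X]
    [NormedAddCommGroup Y] [NormedSpace ℝ Y]
    (f : X → Y) (Jf : X → Set (X →L[ℝ] Y)) (U : Set X) : Prop :=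
  ∀ x ∈ U, ∀ y : Y, y ≠ f x →
    IsClosed ((StrongDual.toWeakDual : (X →L[ℝ] ℝ) → WeakDual ℝ X) ''
        pjComp f Jf x y) ∧
    Convex ℝ (pjComp f Jf x y) ∧
    IsPseudoJacobianAt (fun z : X => ‖f z - y‖) (pjComp f Jf x y) x

/-- The co-norm of a bounded linear operator: `//T// = inf {‖T x‖ : ‖x‖ = 1}`. -/
def conorm {X Y : Type*} [NormedAddCommGroup X] [NormedSpace ℝ X]
    [NormedAddCommGroup Y] [NormedSpace ℝ Y] (T : X →L[ℝ] Y) : ℝ :=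
  sInf {c : ℝ | ∃ x : X, ‖x‖ = 1 ∧ c = ‖T x‖}

/-- `T` is an isomorphism of Banach spaces, i.e. a bijective bounded linear operator
with bounded inverse. -/
def IsBanachIso {X Y : Type*} [NormedAddCommGroup X] [NormedSpace ℝ X]
    [NormedAddCommGroup Y] [NormedSpace ℝ Y] (T : X →L[ℝ] Y) : Prop :=
  ∃ e : X ≃L[ℝ] Y, (e : X →L[ℝ] Y) = T

/-- `Jf(B(x, r)) = ⋃_{z ∈ B(x,r)} Jf z`. -/
def pjBall {X Y : Type*} [NormedAddCommGroup X] [NormedSpace ℝ X]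
    [NormedAddCommGroup Y] [NormedSpace ℝ Y]
    (Jf : X → Set (X →L[ℝ] Y)) (x : X) (r : ℝ) : Set (X →L[ℝ] Y) :=
  ⋃ z ∈ Metric.ball x r, Jf z

/-- The regularity index of `Jf` at `x`:
`α_{Jf}(x) = sup_{r > 0} inf {//T// : T ∈ co Jf(B(x,r))}`. -/
def regIndex {X Y : Type*} [NormedAddCommGroup X] [NormedSpace ℝ X]
    [NormedAddCommGroup Y] [NormedSpace ℝ Y]
    (Jf : X → Set (X →L[ℝ] Y)) (x : X) : ℝ :=
  sSup {c : ℝ | ∃ r > 0, c = sInf (conorm '' convexHull ℝ (pjBall Jf x r))}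

/-- `Jf` is regular at `x`: for some `r > 0` every operator in `co Jf(B(x,r))` is an
isomorphism, and the regularity index at `x` is positive. -/
def IsRegularAt {X Y : Type*} [NormedAddCommGroup X] [NormedSpace ℝ X]
    [NormedAddCommGroup Y] [NormedSpace ℝ Y]
    (Jf : X → Set (X →L[ℝ] Y)) (x : X) : Prop :=
  (∃ r > 0, ∀ T ∈ convexHull ℝ (pjBall Jf x r), IsBanachIso T) ∧ 0 < regIndex Jf x

/-!
On a small ball `B(x, R)` every operator in `co Jf(B(x, R))` is onto and has co-norm `> α`.

*Injectivity.* For `u ≠ w` in the ball, Hahn–Banach separates `0` from the convex set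
`{T (w - u)}`, whose points have norm `≥ α ‖w - u‖`; along the separating functional `p`, the
upper Dini derivatives of `p ∘ f` on the segment `[u, w]` are uniformly negative, so
`p (f w) < p (f u)`.

*Surjectivity with control.* Given `c` and `y` with `‖f c - y‖ < α ρ`, Ekeland's principle
gives a point `w` with `‖w - c‖ ≤ ‖f c - y‖ / α` at which `‖f · - y‖` is locally minimal up to
the cone `α ‖· - w‖`. If `f w ≠ y`, the chain rule condition provides a weak-star closed convex
pseudo-Jacobian of `‖f · - y‖` at `w` made of functionals `p ∘ T` of norm `≥ //T// > α`.
Separating it from the weak-star compact `α`-ball of `X*` gives a direction of descent steeper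
than `α`, which is impossible at such a point.

Surjectivity makes `f` open on the ball, and together with injectivity it gives
`α ‖u - v‖ ≤ ‖f u - f v‖`: otherwise `f u` would be attained again strictly closer to `v`.
-/

section Ekeland

variable {M : Type*} [MetricSpace M] {g : M → ℝ} {ε : ℝ}

def ekelandSet (g : M → ℝ) (ε : ℝ) (a : M) : Set M :=
  {z | g z + ε * dist z a ≤ g a}

lemma self_mem_ekelandSet (a : M) : a ∈ ekelandSet g ε a := by
  simp [ekelandSet]

lemma ekelandSet_subset (hε : 0 ≤ ε) {a b : M} (hb : b ∈ ekelandSet g ε a) :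
    ekelandSet g ε b ⊆ ekelandSet g ε a := fun z hz => by
  have := dist_triangle z b a
  simp only [ekelandSet, mem_ofPred_eq] at hb hz ⊢
  nlinarith

lemma isClosed_ekelandSet (hg : LowerSemicontinuous g) (a : M) :
    IsClosed (ekelandSet g ε a) :=
  (hg.add (continuous_const.mul (continuous_id.dist continuous_const)).lowerSemicontinuous)
    |>.isClosed_preimage (g a)

lemma exists_mem_ekelandSet_forall_mul_dist_le (hε : 0 ≤ ε) (hbdd : BddBelow (range g))
    (a : M) {δ : ℝ} (hδ : 0 < δ) :
    ∃ b ∈ ekelandSet g ε a, ∀ z ∈ ekelandSet g ε b, ε * dist z b ≤ δ := by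
  -- take `b` to be a `δ`-almost minimizer of `g` on `ekelandSet g ε a`
  obtain ⟨_, ⟨b, hb, rfl⟩, hlt⟩ := Real.lt_sInf_add_pos
    ((nonempty_of_mem (self_mem_ekelandSet a)).image g) hδ
  refine ⟨b, hb, fun z hz => ?_⟩
  have hinf : sInf (g '' ekelandSet g ε a) ≤ g z :=
    csInf_le (hbdd.mono (image_subset_range _ _)) (mem_image_of_mem g (ekelandSet_subset hε hb hz))
  simp only [ekelandSet, mem_ofPred_eq] at hz
  linarith

theorem ekeland_variational_principle [CompleteSpace M] (hg : LowerSemicontinuous g)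
    (hbdd : BddBelow (range g)) (hε : 0 < ε) (x₀ : M) :
    ∃ w, g w + ε * dist w x₀ ≤ g x₀ ∧ ∀ z, g w ≤ g z + ε * dist z w := by
  -- nested closed sets `ekelandSet g ε (u n)` of diameter `≤ 2 ^ (1 - n) / ε`, shrinking to `w`
  choose F hF hFsmall using fun (n : ℕ) (a : M) =>
    exists_mem_ekelandSet_forall_mul_dist_le hε.le hbdd a (pow_pos (one_half_pos (α := ℝ)) n)
  let u : ℕ → M := fun n => Nat.rec (F 0 x₀) (fun n a => F (n + 1) a) n
  have hsucc (n : ℕ) : u (n + 1) ∈ ekelandSet g ε (u n) := hF (n + 1) (u n)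
  have hsmall (n : ℕ) : ∀ z ∈ ekelandSet g ε (u n), ε * dist z (u n) ≤ (1 / 2) ^ n := by
    cases n with
    | zero => exact hFsmall 0 x₀
    | succ n => exact hFsmall (n + 1) (u n)
  have hchain (n m : ℕ) (hnm : n ≤ m) : u m ∈ ekelandSet g ε (u n) := by
    induction m, hnm using Nat.le_induction with
    | base => exact self_mem_ekelandSet _
    | succ m _ ih => exact ekelandSet_subset hε.le ih (hsucc m)
  have hdist {n : ℕ} {z z' : M} (hz : z ∈ ekelandSet g ε (u n))
      (hz' : z' ∈ ekelandSet g ε (u n)) : dist z z' ≤ 2 * (1 / 2) ^ n / ε := by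
    rw [le_div_iff₀ hε]
    have := dist_triangle_right z z' (u n)
    nlinarith [hsmall n z hz, hsmall n z' hz']
  have hlim : Tendsto (fun n : ℕ => 2 * (1 / 2 : ℝ) ^ n / ε) atTop (𝓝 0) := by
    simpa using ((tendsto_pow_atTop_nhds_zero_of_lt_one (by norm_num) one_half_lt_one).const_mul
      2).div_const ε
  obtain ⟨w, hw⟩ := cauchySeq_tendsto_of_complete <| cauchySeq_of_le_tendsto_0 _
    (fun n m N hn hm => hdist (hchain N n hn) (hchain N m hm)) hlim
  have hwmem (n : ℕ) : w ∈ ekelandSet g ε (u n) :=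
    (isClosed_ekelandSet hg _).mem_of_tendsto hw (eventually_atTop.mpr ⟨n, hchain n⟩)
  refine ⟨w, ekelandSet_subset hε.le (hF 0 x₀) (hwmem 0), fun z => ?_⟩
  by_contra! hz
  have hzmem : z ∈ ekelandSet g ε w := hz.le
  have hzw : z = w := dist_le_zero.mp <| ge_of_tendsto' hlim fun n =>
    hdist (ekelandSet_subset hε.le (hwmem n) hzmem) (hwmem n)
  simp [hzw] at hz

lemma exists_eventually_le_add_mul_dist [CompleteSpace M] {c : M} {ρ : ℝ}
    (hg : ContinuousOn g (closedBall c ρ)) (hg0 : ∀ z, 0 ≤ g z) (hε : 0 < ε)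
    (hc : g c < ε * ρ) : ∃ w, dist w c ≤ g c / ε ∧ ∀ᶠ z in 𝓝 w, g w ≤ g z + ε * dist z w := by
  have hcmem : c ∈ closedBall c ρ :=
    mem_closedBall_self (nonneg_of_mul_nonneg_right ((hg0 c).trans hc.le) hε)
  have : CompleteSpace (closedBall c ρ) := isClosed_closedBall.completeSpace_coe
  obtain ⟨w, hwc, hwmin⟩ := ekeland_variational_principle hg.domRestrict.lowerSemicontinuous
    ⟨0, forall_mem_range.mpr fun z => hg0 z⟩ hε ⟨c, hcmem⟩
  have hwc' : dist (w : M) c ≤ g c / ε := by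
    rw [le_div_iff₀ hε]
    have := hg0 w
    simp only [domRestrict_apply, Subtype.dist_eq] at hwc
    nlinarith
  refine ⟨w, hwc', ?_⟩
  have hw : ball c ρ ∈ 𝓝 (w : M) :=
    isOpen_ball.mem_nhds (hwc'.trans_lt ((div_lt_iff₀ hε).mpr (by linarith)))
  filter_upwards [hw] with z hz
  exact hwmin ⟨z, ball_subset_closedBall hz⟩

end Ekeland

section

variable {X Y : Type*} [NormedAddCommGroup X] [NormedSpace ℝ X]
  [NormedAddCommGroup Y] [NormedSpace ℝ Y] {U : Set X} {f : X → Y} {Jf : X → Set (X →L[ℝ] Y)}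

/- The sign conditions on `c` in the next two lemmas account for the junk value `0` of `limsup`
when the difference quotients are not eventually bounded above. -/
lemma le_diniUpper_of_eventually_le {φ : X → ℝ} {x v : X} {c : ℝ} (hc : c ≤ 0)
    (h : ∀ᶠ t in 𝓝[>] (0 : ℝ), c ≤ (φ (x + t • v) - φ x) / t) :
    c ≤ diniUpper φ x v := by
  rw [diniUpper, limsup_eq]
  rcases eq_empty_or_nonempty
      {a : ℝ | ∀ᶠ t in 𝓝[>] (0 : ℝ), (φ (x + t • v) - φ x) / t ≤ a} with hempty | hne
  · rwa [hempty, Real.sInf_empty]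
  · refine le_csInf hne fun a ha => ?_
    obtain ⟨t, hct, hta⟩ := (h.and ha).exists
    exact hct.trans hta

lemma frequently_slope_lt_of_diniUpper_le {φ : X → ℝ} {x v : X} {c r : ℝ}
    (h : diniUpper φ x v ≤ c) (hc : c < 0) (hcr : c < r) :
    ∃ᶠ t in 𝓝[>] (0 : ℝ), (φ (x + t • v) - φ x) / t < r := by
  rw [diniUpper, limsup_eq] at h
  have hne : {a : ℝ | ∀ᶠ t in 𝓝[>] (0 : ℝ), (φ (x + t • v) - φ x) / t ≤ a}.Nonempty := by
    by_contra hempty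
    rw [not_nonempty_iff_eq_empty.mp hempty, Real.sInf_empty] at h
    linarith
  obtain ⟨a, ha, har⟩ := exists_lt_of_csInf_lt hne (h.trans_lt hcr)
  rw [mem_ofPred_eq] at ha
  exact (ha.mono fun t hta => hta.trans_lt har).frequently

lemma le_add_of_diniUpper_le_on_segment {φ : X → ℝ} {x v : X} {s : ℝ} (hs : s < 0)
    (hφ : ContinuousOn (fun t : ℝ => φ (x + t • v)) (Icc 0 1))
    (hdini : ∀ t ∈ Ico (0 : ℝ) 1, diniUpper φ (x + t • v) v ≤ s) :
    φ (x + v) ≤ φ x + s := by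
  have key := image_le_of_liminf_slope_right_le_deriv_boundary hφ (B := fun t => φ x + s * t)
    (B' := fun _ => s) (by simp) (by fun_prop)
    (fun t _ => ((hasDerivAt_id t).const_mul s).const_add (φ x) |>.hasDerivWithinAt.congr_deriv
      (by ring))
    ?_ (right_mem_Icc.mpr zero_le_one)
  · simpa only [one_smul, mul_one] using key
  intro t ht r hr
  have hshift : map (fun τ : ℝ => t + τ) (𝓝[>] 0) = 𝓝[>] t := by simp
  rw [← hshift, frequently_map]
  refine (frequently_slope_lt_of_diniUpper_le (hdini t ht) hs hr).mono fun τ hτ => ?_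
  rwa [slope_def_field, add_sub_cancel_left, add_smul, ← add_assoc]

lemma neg_mul_norm_le_diniUpper {φ : X → ℝ} {w : X} {ε : ℝ} (hε : 0 ≤ ε)
    (h : ∀ᶠ z in 𝓝 w, φ w ≤ φ z + ε * ‖z - w‖) (v : X) : -(ε * ‖v‖) ≤ diniUpper φ w v := by
  refine le_diniUpper_of_eventually_le (neg_nonpos.mpr (by positivity)) ?_
  have hray : Tendsto (fun t : ℝ => w + t • v) (𝓝[>] 0) (𝓝 w) :=
    ((Continuous.tendsto' (by fun_prop) 0 w (by simp))).mono_left nhdsWithin_le_nhds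
  filter_upwards [hray.eventually h, self_mem_nhdsWithin] with t ht (ht0 : 0 < t)
  rw [add_sub_cancel_left, norm_smul, Real.norm_of_nonneg ht0.le] at ht
  rw [le_div_iff₀ ht0]
  linarith

lemma IsPseudoJacobianAt.diniUpper_le {J : Set (X →L[ℝ] Y)} {x : X}
    (hJ : IsPseudoJacobianAt f J x) {p : StrongDual ℝ Y} {v : X} {s : ℝ}
    (hs : ∀ T ∈ J, p (T v) ≤ s) : diniUpper (fun z => p (f z)) x v ≤ s :=
  (hJ.2 p v).trans (csSup_le (hJ.1.image _) (forall_mem_image.mpr hs))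

lemma conorm_nonneg (T : X →L[ℝ] Y) : 0 ≤ conorm T :=
  Real.sInf_nonneg fun _ ⟨_, _, hc⟩ => hc ▸ norm_nonneg _

lemma conorm_mul_norm_le (T : X →L[ℝ] Y) (z : X) : conorm T * ‖z‖ ≤ ‖T z‖ := by
  rcases eq_or_ne z 0 with rfl | hz
  · simp
  have hz' : 0 < ‖z‖ := norm_pos_iff.mpr hz
  have hunit : ‖‖z‖⁻¹ • z‖ = 1 := by rw [norm_smul, norm_inv, norm_norm, inv_mul_cancel₀ hz'.ne']
  have hle : conorm T ≤ ‖T (‖z‖⁻¹ • z)‖ :=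
    csInf_le ⟨0, fun c ⟨_, _, hc⟩ => hc ▸ norm_nonneg _⟩ ⟨_, hunit, rfl⟩
  rw [map_smul, norm_smul, norm_inv, norm_norm, inv_mul_eq_div, le_div_iff₀ hz'] at hle
  exact hle

lemma exists_apply_lt_of_le_conorm {J : Set (X →L[ℝ] Y)} (hJ : Convex ℝ J) {β : ℝ}
    (hβ : 0 < β) (hconorm : ∀ T ∈ J, β ≤ conorm T) {d : X} (hd : d ≠ 0) :
    ∃ p : StrongDual ℝ Y, ∃ s < 0, ∀ T ∈ J, p (T d) < s := by
  set K := (ContinuousLinearMap.apply ℝ Y d) '' J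
  have hK : closure K ⊆ {q | β * ‖d‖ ≤ ‖q‖} := by
    refine closure_minimal ?_ (isClosed_le continuous_const continuous_norm)
    rintro _ ⟨T, hT, rfl⟩
    exact (mul_le_mul_of_nonneg_right (hconorm T hT) (norm_nonneg d)).trans
      (conorm_mul_norm_le T d)
  have h0 : (0 : Y) ∉ closure K := fun h0 => by
    have := hK h0
    simp only [mem_ofPred_eq, norm_zero] at this
    nlinarith [norm_pos_iff.mpr hd]
  obtain ⟨p, s, hps, hs⟩ :=
    geometric_hahn_banach_closed_point (hJ.linear_image _).closure isClosed_closure h0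
  exact ⟨p, s, by simpa using hs, fun T hT => hps _ (subset_closure (mem_image_of_mem _ hT))⟩

lemma clarkeDirDeriv_norm_neg_self_le (y : Y) :
    clarkeDirDeriv (fun w : Y => ‖w‖) y (-y) ≤ -‖y‖ := by
  refine le_of_forall_pos_le_add fun η hη => ?_
  have hnear : ∀ᶠ q : Y × ℝ in 𝓝 y ×ˢ 𝓝[>] 0, dist q.1 y < η / 2 ∧ 0 < q.2 ∧ q.2 < 1 :=
    (Eventually.prod_inl (ball_mem_nhds y (half_pos hη)) _).and
      (Eventually.prod_inr (Ioo_mem_nhdsGT one_pos) _)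
  refine limsup_le_of_le (isCoboundedUnder_le_of_eventually_le _ (x := -‖y‖) ?_) ?_
  · filter_upwards [hnear] with ⟨z, t⟩ ⟨_, ht0, _⟩
    dsimp only at ht0 ⊢
    rw [le_div_iff₀ ht0]
    have := norm_sub_norm_le z (z + t • -y)
    rw [sub_add_cancel_left, norm_neg, norm_smul, norm_neg, Real.norm_of_nonneg ht0.le] at this
    linarith
  · filter_upwards [hnear] with ⟨z, t⟩ ⟨hz, ht0, ht1⟩
    dsimp only at hz ht0 ht1 ⊢
    rw [div_le_iff₀ ht0]
    rw [dist_eq_norm] at hz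
    have hsplit : z + t • -y = (1 - t) • z + t • (z - y) := by module
    have hconv : ‖z + t • -y‖ ≤ (1 - t) * ‖z‖ + t * ‖z - y‖ := by
      rw [hsplit]
      refine (norm_add_le _ _).trans_eq ?_
      rw [norm_smul, norm_smul, Real.norm_of_nonneg (by linarith), Real.norm_of_nonneg ht0.le]
    have hy : ‖y‖ ≤ ‖z‖ + ‖z - y‖ := by
      linarith [norm_sub_norm_le y z, norm_sub_rev y z]
    nlinarith

lemma norm_le_apply_of_mem_clarkeSubdiff_norm {y : Y} {p : StrongDual ℝ Y}
    (hp : p ∈ clarkeSubdiff (fun w : Y => ‖w‖) y) : ‖y‖ ≤ p y := by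
  have := (hp (-y)).trans (clarkeDirDeriv_norm_neg_self_le y)
  rw [map_neg] at this
  linarith

lemma conorm_le_norm_comp {T : X →L[ℝ] Y} (hT : Function.Surjective T)
    {y : Y} (hy : y ≠ 0) {p : StrongDual ℝ Y} (hp : p ∈ clarkeSubdiff (fun w : Y => ‖w‖) y) :
    conorm T ≤ ‖p.comp T‖ := by
  obtain ⟨z, rfl⟩ := hT y
  have hz : 0 < ‖z‖ := norm_pos_iff.mpr fun h => hy (by rw [h, map_zero])
  refine le_of_mul_le_mul_right ?_ hz
  calc conorm T * ‖z‖ ≤ ‖T z‖ := conorm_mul_norm_le T z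
    _ ≤ p.comp T z := norm_le_apply_of_mem_clarkeSubdiff_norm hp
    _ ≤ ‖p.comp T‖ * ‖z‖ := (le_abs_self _).trans ((p.comp T).le_opNorm z)

lemma exists_mul_norm_lt_apply_of_lt_norm {A : Set (StrongDual ℝ X)}
    (hAc : IsClosed (StrongDual.toWeakDual '' A)) (hAconv : Convex ℝ A) {ε : ℝ} (hε : 0 ≤ ε)
    (hA : ∀ S ∈ A, ε < ‖S‖) : ∃ v : X, ∃ c : ℝ, ε * ‖v‖ < c ∧ ∀ S ∈ A, c < S v := by
  have : LocallyConvexSpace ℝ (WeakDual ℝ X) := WeakBilin.locallyConvexSpace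
  let K : Set (WeakDual ℝ X) := WeakDual.toStrongDual ⁻¹' closedBall 0 ε
  have hKconv : Convex ℝ K := (convex_closedBall _ _).linear_preimage
    (WeakDual.toStrongDual : WeakDual ℝ X ≃ₗ[ℝ] StrongDual ℝ X).toLinearMap
  have hAconv' : Convex ℝ (StrongDual.toWeakDual '' A) :=
    hAconv.linear_image (StrongDual.toWeakDual : StrongDual ℝ X ≃ₗ[ℝ] WeakDual ℝ X).toLinearMap
  have hdisj : Disjoint K (StrongDual.toWeakDual '' A) := by
    rw [disjoint_left]
    rintro _ hSK ⟨S, hS, rfl⟩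
    rw [mem_preimage, mem_closedBall_zero_iff] at hSK
    exact (hA S hS).not_ge hSK
  obtain ⟨φ, a, b, hK, hab, hA'⟩ := geometric_hahn_banach_compact_closed
    hKconv (WeakDual.isCompact_closedBall 0 ε) hAconv' hAc hdisj
  -- weak-star continuous functionals are evaluations at points of `X`
  obtain ⟨v, rfl⟩ := (topDualPairing ℝ X).dualEmbedding_surjective φ
  obtain ⟨g, hg, hgv⟩ := exists_dual_vector'' ℝ v
  refine ⟨v, a, ?_, fun S hS => hab.trans (hA' _ (mem_image_of_mem _ hS))⟩
  have hεg : ‖ε • g‖ ≤ ε := by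
    rw [norm_smul, Real.norm_of_nonneg hε]; exact mul_le_of_le_one_right hε hg
  calc ε * ‖v‖ = (ε • g) v := by simp [hgv]
    _ < a := hK (StrongDual.toWeakDual (ε • g)) (by simpa [K] using hεg)

lemma IsPseudoJacobianAt.not_eventually_le_add_mul_norm {φ : X → ℝ} {A : Set (StrongDual ℝ X)}
    {w : X} (hA : IsPseudoJacobianAt φ A w) (hAc : IsClosed (StrongDual.toWeakDual '' A))
    (hAconv : Convex ℝ A) {ε : ℝ} (hε : 0 ≤ ε) (hnorm : ∀ S ∈ A, ε < ‖S‖) :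
    ¬ ∀ᶠ z in 𝓝 w, φ w ≤ φ z + ε * ‖z - w‖ := fun hmin => by
  obtain ⟨v, c, hvc, hcA⟩ := exists_mul_norm_lt_apply_of_lt_norm hAc hAconv hε hnorm
  have hupper : diniUpper φ w (-v) ≤ -c :=
    hA.diniUpper_le (p := ContinuousLinearMap.id ℝ ℝ) fun S hS => by simpa using (hcA S hS).le
  have hlower := neg_mul_norm_le_diniUpper hε hmin (-v)
  rw [norm_neg] at hlower
  linarith

theorem injOn_of_le_conorm {C : Set X} (hC : Convex ℝ C) (hf : ContinuousOn f C)
    (hJf : ∀ z ∈ C, IsPseudoJacobianAt f (Jf z) z) {β : ℝ} (hβ : 0 < β)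
    (hconorm : ∀ T ∈ convexHull ℝ (⋃ z ∈ C, Jf z), β ≤ conorm T) : InjOn f C := by
  intro u hu w hw hfuw
  by_contra hne
  obtain ⟨p, s, hs, hps⟩ := exists_apply_lt_of_le_conorm (convex_convexHull ℝ _) hβ hconorm
    (sub_ne_zero.mpr (Ne.symm hne))
  have hseg (t : ℝ) (ht : t ∈ Icc 0 1) : u + t • (w - u) ∈ C := hC.add_smul_sub_mem hu hw ht
  have hdrop := le_add_of_diniUpper_le_on_segment (φ := fun z => p (f z)) hs
    (p.continuous.comp_continuousOn (hf.comp (by fun_prop) hseg)) fun t ht =>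
      (hJf _ (hseg t (Ico_subset_Icc_self ht))).diniUpper_le fun T hT =>
        (hps T (subset_convexHull ℝ _ (mem_biUnion (hseg t (Ico_subset_Icc_self ht)) hT))).le
  rw [add_sub_cancel, hfuw] at hdrop
  linarith

theorem exists_eq_of_norm_sub_lt [CompleteSpace X] (hcrc : ChainRuleCond f Jf U) {c : X}
    {ρ ε : ℝ} (hε : 0 < ε) (hU : closedBall c ρ ⊆ U) (hf : ContinuousOn f (closedBall c ρ))
    (hJ : ∀ z ∈ closedBall c ρ, ∀ T ∈ convexHull ℝ (Jf z), Function.Surjective T ∧ ε < conorm T)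
    {y : Y} (hy : ‖f c - y‖ < ε * ρ) : ∃ w, ‖w - c‖ ≤ ‖f c - y‖ / ε ∧ f w = y := by
  obtain ⟨w, hwc, hmin⟩ := exists_eventually_le_add_mul_dist (g := fun z => ‖f z - y‖)
    (hf.sub continuousOn_const).norm (fun _ => norm_nonneg _) hε hy
  rw [dist_eq_norm] at hwc
  refine ⟨w, hwc, ?_⟩
  by_contra hfw
  have hw : w ∈ closedBall c ρ := by
    rw [mem_closedBall, dist_eq_norm]
    exact hwc.trans ((div_le_iff₀ hε).mpr (by linarith))
  obtain ⟨hAc, hAconv, hA⟩ := hcrc w (hU hw) y (Ne.symm hfw)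
  refine hA.not_eventually_le_add_mul_norm hAc hAconv hε.le ?_
    (by simpa only [dist_eq_norm] using hmin)
  rintro _ ⟨p, hp, T, hT, rfl⟩
  obtain ⟨hsurj, hlt⟩ := hJ w hw T hT
  exact hlt.trans_le (conorm_le_norm_comp hsurj (sub_ne_zero.mpr hfw) hp)

lemma convexHull_subset_convexHull_pjBall {x z : X} {r : ℝ} (hz : z ∈ ball x r) :
    convexHull ℝ (Jf z) ⊆ convexHull ℝ (pjBall Jf x r) :=
  convexHull_mono (subset_biUnion_of_mem hz)

theorem isOpen_image_of_subset_ball [CompleteSpace X] {x : X} {R α : ℝ}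
    (hcrc : ChainRuleCond f Jf U) (hRU : ball x R ⊆ U) (hf : ContinuousOn f (ball x R))
    (hJ : ∀ T ∈ convexHull ℝ (pjBall Jf x R), Function.Surjective T ∧ α < conorm T)
    (hα : 0 < α) {W : Set X} (hW : W ⊆ ball x R) (hWo : IsOpen W) : IsOpen (f '' W) := by
  rw [Metric.isOpen_iff]
  rintro _ ⟨c, hc, rfl⟩
  obtain ⟨ρ, hρ, hρW⟩ := nhds_basis_closedBall.mem_iff.mp (hWo.mem_nhds hc)
  have hρR : closedBall c ρ ⊆ ball x R := hρW.trans hW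
  refine ⟨α * ρ, by positivity, fun y hy => ?_⟩
  rw [mem_ball, dist_comm, dist_eq_norm] at hy
  obtain ⟨w, hwc, rfl⟩ := exists_eq_of_norm_sub_lt hcrc hα (hρR.trans hRU) (hf.mono hρR)
    (fun z hz T hT => hJ T (convexHull_subset_convexHull_pjBall (hρR hz) hT)) hy
  refine mem_image_of_mem f (hρW ?_)
  rw [mem_closedBall, dist_eq_norm]
  exact hwc.trans ((div_le_iff₀ hα).mpr (by linarith))

theorem mul_norm_sub_le_norm_sub [CompleteSpace X] {x : X} {R α : ℝ}
    (hcrc : ChainRuleCond f Jf U) (hRU : ball x R ⊆ U) (hf : ContinuousOn f (ball x R))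
    (hinj : InjOn f (ball x R))
    (hJ : ∀ T ∈ convexHull ℝ (pjBall Jf x R), Function.Surjective T ∧ α < conorm T)
    (hα : 0 < α) {u v : X} (hu : u ∈ ball x (R / 3)) (hv : v ∈ ball x (R / 3)) :
    α * ‖u - v‖ ≤ ‖f u - f v‖ := by
  by_contra! hlt
  rw [mem_ball] at hu hv
  have huv : ‖u - v‖ < 2 * R / 3 := by
    linarith [dist_eq_norm u v, dist_triangle_right u v x]
  have hball : closedBall v ‖u - v‖ ⊆ ball x R := closedBall_subset_ball' (by linarith)
  -- `f u` is attained again on the ball around `v`, at a point strictly closer to `v` than `u`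
  obtain ⟨w, hwv, hfw⟩ := exists_eq_of_norm_sub_lt hcrc hα (hball.trans hRU) (hf.mono hball)
    (fun z hz T hT => hJ T (convexHull_subset_convexHull_pjBall (hball hz) hT)) (y := f u)
    (by rwa [norm_sub_rev])
  have hwu : ‖w - v‖ < ‖u - v‖ :=
    hwv.trans_lt ((div_lt_iff₀ hα).mpr (by rw [norm_sub_rev]; linarith))
  have hmem (z : X) (hz : ‖z - v‖ ≤ ‖u - v‖) : z ∈ ball x R :=
    hball (by rwa [mem_closedBall, dist_eq_norm])
  rw [hinj (hmem w hwu.le) (hmem u le_rfl) hfw] at hwu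
  exact lt_irrefl _ hwu

lemma convexHull_pjBall_mono {x : X} {r r' : ℝ} (h : r ≤ r') :
    convexHull ℝ (pjBall Jf x r) ⊆ convexHull ℝ (pjBall Jf x r') :=
  convexHull_mono (biUnion_subset_biUnion_left (ball_subset_ball h))

lemma exists_forall_lt_conorm_of_lt_regIndex {x : X} {α : ℝ} (hα : α < regIndex Jf x) :
    ∃ r > 0, ∀ T ∈ convexHull ℝ (pjBall Jf x r), α < conorm T := by
  obtain ⟨_, ⟨r, hr, rfl⟩, hlt⟩ := exists_lt_of_lt_csSup (by exact ⟨_, 1, one_pos, rfl⟩) hα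
  exact ⟨r, hr, fun T hT => hlt.trans_le
    (csInf_le ⟨0, forall_mem_image.mpr fun T _ => conorm_nonneg T⟩ (mem_image_of_mem _ hT))⟩

lemma IsRegularAt.exists_forall_surjective_lt_conorm {x : X} (hreg : IsRegularAt Jf x) {α : ℝ}
    (hα : α < regIndex Jf x) :
    ∃ r > 0, ∀ T ∈ convexHull ℝ (pjBall Jf x r), Function.Surjective T ∧ α < conorm T := by
  obtain ⟨⟨r₁, hr₁, hiso⟩, -⟩ := hreg
  obtain ⟨r₂, hr₂, hconorm⟩ := exists_forall_lt_conorm_of_lt_regIndex hα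
  refine ⟨min r₁ r₂, lt_min hr₁ hr₂, fun T hT => ⟨?_, hconorm T ?_⟩⟩
  · obtain ⟨e, rfl⟩ := hiso T (convexHull_pjBall_mono (min_le_left _ _) hT)
    exact e.surjective
  · exact convexHull_pjBall_mono (min_le_right _ _) hT

end

theorem local_inversion_general
    {X Y : Type*} [NormedAddCommGroup X] [NormedSpace ℝ X] [CompleteSpace X]
    [NormedAddCommGroup Y] [NormedSpace ℝ Y]
    {U : Set X} (hUopen : IsOpen U)
    {f : X → Y} (hf : ContinuousOn f U)
    {Jf : X → Set (X →L[ℝ] Y)} (hJf : ∀ z ∈ U, IsPseudoJacobianAt f (Jf z) z)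
    (hcrc : ChainRuleCond f Jf U)
    {x : X} (hx : x ∈ U) (hreg : IsRegularAt Jf x) :
    ∀ α : ℝ, 0 < α → α < regIndex Jf x →
      ∃ r > 0, Metric.ball x r ⊆ U ∧
        IsOpen (f '' Metric.ball x r) ∧
        (∀ W : Set X, W ⊆ Metric.ball x r → IsOpen W → IsOpen (f '' W)) ∧
        Set.InjOn f (Metric.ball x r) ∧
        ∀ u ∈ Metric.ball x r, ∀ v ∈ Metric.ball x r,
          ‖u - v‖ ≤ (1 / α) * ‖f u - f v‖ := by
  intro α hα hαreg
  obtain ⟨r₁, hr₁, hJ₁⟩ := hreg.exists_forall_surjective_lt_conorm hαreg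
  obtain ⟨r₂, hr₂, hr₂U⟩ := isOpen_iff.mp hUopen x hx
  set R := min r₁ r₂
  have hRU : ball x R ⊆ U := (ball_subset_ball (min_le_right _ _)).trans hr₂U
  have hJ (T) (hT : T ∈ convexHull ℝ (pjBall Jf x R)) :=
    hJ₁ T (convexHull_pjBall_mono (min_le_left _ _) hT)
  have hinj : InjOn f (ball x R) := injOn_of_le_conorm (convex_ball x R) (hf.mono hRU)
    (fun z hz => hJf z (hRU hz)) hα fun T hT => (hJ T hT).2.le
  have hsub : ball x (R / 3) ⊆ ball x R := ball_subset_ball (by linarith [lt_min hr₁ hr₂])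
  refine ⟨R / 3, by positivity, hsub.trans hRU,
    isOpen_image_of_subset_ball hcrc hRU (hf.mono hRU) hJ hα hsub isOpen_ball,
    fun W hW => isOpen_image_of_subset_ball hcrc hRU (hf.mono hRU) hJ hα (hW.trans hsub),
    hinj.mono hsub, fun u hu v hv => ?_⟩
  rw [one_div, ← div_eq_inv_mul, le_div_iff₀ hα, mul_comm]
  exact mul_norm_sub_le_norm_sub hcrc hRU (hf.mono hRU) hinj hJ hα hu hv

/-- Local inversion theorem: if `Jf` satisfies the chain rule condition and is regular
at `x ∈ U`, then for every `0 < α < α_{Jf}(x)` there is a ball `B(x, r) ⊆ U` such that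
`f(B(x, r))` is open, `f` restricted to `B(x, r)` is a homeomorphism onto its image
(it is continuous, injective and open), and the inverse is `(1/α)`-Lipschitz. -/
theorem local_inversion
    {X Y : Type*} [NormedAddCommGroup X] [NormedSpace ℝ X] [CompleteSpace X]
    [NormedAddCommGroup Y] [NormedSpace ℝ Y] [CompleteSpace Y]
    {U : Set X} (hUopen : IsOpen U)
    {f : X → Y} (hf : ContinuousOn f U)
    {Jf : X → Set (X →L[ℝ] Y)} (hJf : ∀ z ∈ U, IsPseudoJacobianAt f (Jf z) z)
    (hcrc : ChainRuleCond f Jf U)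
    {x : X} (hx : x ∈ U) (hreg : IsRegularAt Jf x) :
    ∀ α : ℝ, 0 < α → α < regIndex Jf x →
      ∃ r > 0, Metric.ball x r ⊆ U ∧
        IsOpen (f '' Metric.ball x r) ∧
        (∀ W : Set X, W ⊆ Metric.ball x r → IsOpen W → IsOpen (f '' W)) ∧
        Set.InjOn f (Metric.ball x r) ∧
        ∀ u ∈ Metric.ball x r, ∀ v ∈ Metric.ball x r,
          ‖u - v‖ ≤ (1 / α) * ‖f u - f v‖ :=
  local_inversion_general hUopen hf hJf hcrc hx hreg

end
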